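/- arXiv:1302.2128 — 5 statements merged into one kernel-verified Lean document; each statement's English description precedes it below -/
import Mathlib

section
/- Let D : 𝒳 → [0,1] be a function on a finite set 𝒳, let k, δ > 0, and let Y⁺ be uniform on a set Max^k_D of 2^k elements where D is largest. Then for any distribution Y on 𝒳 with min-entropy at least k + log₂(1/δ), the probability over x ← Y that D(x) > E_{x'←Y⁺} D(x') is strictly less than δ. -/
open scoped Classical
open Finset

/-!
Every `x` with `D x` above the average of `D` on the top set `S` must lie in `S`, and not every
element of `S` can lie strictly above that average, so at most `2^k - 1` points qualify. Each of
them has `Y`-mass at most `2^{-(k + log₂(1/δ))} = δ / 2^k`, for a total below `δ`.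
-/

namespace Finset

variable {α : Type*} {S : Finset α} {D : α → ℝ}

theorem mem_of_sum_lt_card_mul (hS : ∀ x ∈ S, ∀ x' ∉ S, D x' ≤ D x) {x : α}
    (hx : ∑ x' ∈ S, D x' < S.card * D x) : x ∈ S := by
  by_contra hxS
  have hle : S.card • D x ≤ ∑ x' ∈ S, D x' :=
    card_nsmul_le_sum S D (D x) fun x' hx' => hS x' hx' x hxS
  rw [nsmul_eq_mul] at hle
  linarith

theorem exists_card_mul_le_sum (hS : S.Nonempty) : ∃ x ∈ S, S.card * D x ≤ ∑ x' ∈ S, D x' :=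
  exists_le_of_sum_le hS (by rw [sum_const, nsmul_eq_mul, ← mul_sum])

theorem card_filter_sum_lt_card_mul_lt [Fintype α] (hS : ∀ x ∈ S, ∀ x' ∉ S, D x' ≤ D x)
    (hne : S.Nonempty) : (univ.filter fun x => ∑ x' ∈ S, D x' < S.card * D x).card < S.card := by
  refine card_lt_card ⟨fun x hx => mem_of_sum_lt_card_mul hS (mem_filter.1 hx).2, fun hsub => ?_⟩
  obtain ⟨x, hxS, hx⟩ := exists_card_mul_le_sum (D := D) hne
  exact not_lt_of_ge hx (mem_filter.1 (hsub hxS)).2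

end Finset

theorem two_rpow_neg_add_logb_one_div {δ : ℝ} (hδ : 0 < δ) (k : ℕ) :
    (2:ℝ) ^ (-((k : ℝ) + Real.logb 2 (1 / δ))) = δ / 2 ^ k := by
  rw [Real.rpow_neg zero_le_two, Real.rpow_add zero_lt_two,
    Real.rpow_logb zero_lt_two (by norm_num) (by positivity), Real.rpow_natCast]
  field_simp

theorem stmt4_general {α : Type*} [Fintype α]
    (D : α → ℝ)
    (k : ℕ) (δ : ℝ) (hδ : 0 < δ)
    (S : Finset α) (hScard : S.card = 2 ^ k)
    (hStop : ∀ x ∈ S, ∀ x' ∉ S, D x' ≤ D x)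
    (Y : α → ℝ)
    (hYk : ∀ x, Y x ≤ (2:ℝ) ^ (-((k : ℝ) + Real.logb 2 (1 / δ)))) :
    ∑ x ∈ Finset.univ.filter
        (fun x => ((2:ℝ) ^ k)⁻¹ * ∑ x' ∈ S, D x' < D x), Y x < δ := by
  have h2k : (0:ℝ) < 2 ^ k := by positivity
  have hne : S.Nonempty := by rw [← card_pos, hScard]; positivity
  have hfilter : univ.filter (fun x => ((2:ℝ) ^ k)⁻¹ * ∑ x' ∈ S, D x' < D x)
      = univ.filter (fun x => ∑ x' ∈ S, D x' < S.card * D x) := by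
    refine filter_congr fun x _ => ?_
    rw [hScard, inv_mul_lt_iff₀ h2k, Nat.cast_pow, Nat.cast_two]
  have hcard : ((univ.filter fun x => ∑ x' ∈ S, D x' < S.card * D x).card : ℝ) < 2 ^ k := by
    exact_mod_cast (card_filter_sum_lt_card_mul_lt hStop hne).trans_eq hScard
  rw [hfilter]
  calc _ ≤ (univ.filter fun x => ∑ x' ∈ S, D x' < S.card * D x).card • (δ / 2 ^ k) :=
        sum_le_card_nsmul _ _ _ fun x _ => two_rpow_neg_add_logb_one_div hδ k ▸ hYk x
    _ < 2 ^ k * (δ / 2 ^ k) := by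
        rw [nsmul_eq_mul]; exact mul_lt_mul_of_pos_right hcard (by positivity)
    _ = δ := by field_simp

/-- If `Y` has min-entropy at least `k + log₂(1/δ)`, the probability over `x ← Y`
that `D(x)` exceeds the average of `D` on a top-`2^k` set is strictly less than `δ`. -/
theorem stmt4 {α : Type*} [Fintype α]
    (D : α → ℝ) (hD : ∀ x, D x ∈ Set.Icc (0:ℝ) 1)
    (k : ℕ) (δ : ℝ) (hδ : 0 < δ)
    (S : Finset α) (hScard : S.card = 2 ^ k)
    (hStop : ∀ x ∈ S, ∀ x' ∉ S, D x' ≤ D x)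
    (Y : α → ℝ) (hY0 : ∀ x, 0 ≤ Y x) (hY1 : ∑ x, Y x = 1)
    (hYk : ∀ x, Y x ≤ (2:ℝ) ^ (-((k : ℝ) + Real.logb 2 (1 / δ)))) :
    ∑ x ∈ Finset.univ.filter
        (fun x => ((2:ℝ) ^ k)⁻¹ * ∑ x' ∈ S, D x' < D x), Y x < δ :=
  stmt4_general D k δ hδ S hScard hStop Y hYk
end

section
/- Let X, Y be distributions on a finite set 𝒳, D : 𝒳 → {0,1} a boolean function, and suppose |E_{x←X} D(x) − E_{x←Y} D(x)| ≤ ε where H∞(Y) ≥ k. Let Z be a random variable jointly distributed with X taking values in a finite set. Then for every z with P(Z=z) > 0 there exists a distribution Y'_z on 𝒳 with H∞(Y'_z) ≥ k − log₂(1/P(Z=z)) such that |E_{x←X|Z=z} D(x) − E_{x←Y'_z} D(x)| ≤ ε / P(Z=z). -/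
open scoped Classical
open Finset

/-- Leakage lemma (Fuller–Reyzin, distributional form): if `D` cannot distinguish `X`
from some `Y` with `H∞(Y) ≥ k` better than `ε`, then for every `z` with `P(Z=z) > 0`
there is `Y'_z` with `H∞(Y'_z) ≥ k − log₂(1/P(Z=z))` such that `D` cannot distinguish
`X|Z=z` from `Y'_z` better than `ε / P(Z=z)`. -/
theorem stmt7 {α ζ : Type*} [Fintype α] [Fintype ζ]
    (P : α × ζ → ℝ) (hP0 : ∀ p, 0 ≤ P p) (hP1 : ∑ p, P p = 1)
    (D : α → Bool) (ε k : ℝ)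
    (Y : α → ℝ) (hY0 : ∀ x, 0 ≤ Y x) (hY1 : ∑ x, Y x = 1)
    (hYk : ∀ x, Y x ≤ (2:ℝ) ^ (-k))
    (hadv : |(∑ x, (∑ z, P (x, z)) * (if D x then (1:ℝ) else 0)) -
        ∑ x, Y x * (if D x then (1:ℝ) else 0)| ≤ ε) :
    ∀ z : ζ, 0 < ∑ x, P (x, z) →
      ∃ Y' : α → ℝ, (∀ x, 0 ≤ Y' x) ∧ (∑ x, Y' x = 1) ∧
        (∀ x, Y' x ≤ (2:ℝ) ^ (-(k - Real.logb 2 (1 / ∑ x', P (x', z))))) ∧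
        |(∑ x, (P (x, z) / ∑ x', P (x', z)) * (if D x then (1:ℝ) else 0)) -
          ∑ x, Y' x * (if D x then (1:ℝ) else 0)| ≤ ε / ∑ x', P (x', z) := by
  intro z hz
  set p : ℝ := ∑ x', P (x', z) with hpdef
  have hεnn : 0 ≤ ε := le_trans (abs_nonneg _) hadv
  set c2 : ℝ := (2:ℝ) ^ (-k) with hc2def
  have hc2pos : 0 < c2 := Real.rpow_pos_of_pos (by norm_num) _
  set s := Finset.univ.filter (fun x : α => D x = true) with hsdef
  set t := Finset.univ.filter (fun x : α => ¬ (D x = true)) with htdef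
  have hsum_ite : ∀ W : α → ℝ,
      ∑ x, W x * (if D x then (1:ℝ) else 0) = ∑ x ∈ s, W x := by
    intro W
    rw [hsdef, Finset.sum_filter]
    exact Finset.sum_congr rfl fun x _ => by by_cases h : D x = true <;> simp [h]
  -- total probability one, split as sums
  have hPtot : ∑ x : α, ∑ z' : ζ, P (x, z') = 1 := by
    rw [← hP1, ← Fintype.sum_prod_type]
  have hp1 : p ≤ 1 := by
    rw [hpdef]
    calc ∑ x', P (x', z) ≤ ∑ x, ∑ z', P (x, z') :=
          Finset.sum_le_sum fun x _ =>
            Finset.single_le_sum (fun z' _ => hP0 _) (Finset.mem_univ z)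
      _ = 1 := hPtot
  set q : ℝ := ∑ x ∈ s, Y x with hqdef
  set EXD : ℝ := ∑ x ∈ s, ∑ z' : ζ, P (x, z') with hEXDdef
  have hsplitY : (∑ x ∈ s, Y x) + ∑ x ∈ t, Y x = 1 := by
    rw [hsdef, htdef, Finset.sum_filter_add_sum_filter_not, hY1]
  have hsplitPX : EXD + ∑ x ∈ t, ∑ z' : ζ, P (x, z') = 1 := by
    rw [hEXDdef, hsdef, htdef, Finset.sum_filter_add_sum_filter_not, hPtot]
  have hsplitPz : (∑ x ∈ s, P (x, z)) + ∑ x ∈ t, P (x, z) = p := by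
    rw [hsdef, htdef, Finset.sum_filter_add_sum_filter_not, hpdef]
  have hadv' : |EXD - q| ≤ ε := by
    rw [hqdef, hEXDdef, ← hsum_ite, ← hsum_ite]; exact hadv
  set Tr : ℝ := (s.card : ℝ) with hTrdef
  set Fr : ℝ := (t.card : ℝ) with hFrdef
  have hTr0 : 0 ≤ Tr := by positivity
  have hFr0 : 0 ≤ Fr := by positivity
  have hqT : q ≤ Tr * c2 := by
    rw [hqdef, hTrdef]
    calc ∑ x ∈ s, Y x ≤ ∑ x ∈ s, c2 := Finset.sum_le_sum fun x _ => hYk x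
      _ = (s.card : ℝ) * c2 := by rw [Finset.sum_const, nsmul_eq_mul]
  have hqF : 1 - q ≤ Fr * c2 := by
    have : ∑ x ∈ t, Y x ≤ ∑ x ∈ t, c2 := Finset.sum_le_sum fun x _ => hYk x
    rw [Finset.sum_const, nsmul_eq_mul] at this
    rw [hFrdef]; linarith [hsplitY]
  set c : ℝ := c2 / p with hcdef
  have hcpos : 0 < c := div_pos hc2pos hz
  have hc2c : c2 ≤ c := by
    rw [hcdef, le_div_iff₀ hz]; nlinarith
  -- conditional expectation a
  set a : ℝ := (∑ x ∈ s, P (x, z)) / p with hadef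
  have hsnn : 0 ≤ ∑ x ∈ s, P (x, z) := Finset.sum_nonneg fun x _ => hP0 _
  have htnn : 0 ≤ ∑ x ∈ t, P (x, z) := Finset.sum_nonneg fun x _ => hP0 _
  have ha0 : 0 ≤ a := div_nonneg hsnn hz.le
  have ha1 : a ≤ 1 := by
    rw [hadef, div_le_one hz]; linarith
  have hpa : p * a = ∑ x ∈ s, P (x, z) := by
    rw [hadef, mul_div_cancel₀ _ (ne_of_gt hz)]
  -- key inequalities
  have hsle : ∑ x ∈ s, P (x, z) ≤ EXD := by
    rw [hEXDdef]
    exact Finset.sum_le_sum fun x _ =>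
      Finset.single_le_sum (fun z' _ => hP0 _) (Finset.mem_univ z)
  have htle : ∑ x ∈ t, P (x, z) ≤ ∑ x ∈ t, ∑ z' : ζ, P (x, z') := by
    exact Finset.sum_le_sum fun x _ =>
      Finset.single_le_sum (fun z' _ => hP0 _) (Finset.mem_univ z)
  have hA : p * a ≤ q + ε := by
    rw [hpa]
    have : EXD - q ≤ ε := (abs_le.mp hadv').2
    linarith
  have hB : p * (1 - a) ≤ 1 - q + ε := by
    have h1 : p * (1 - a) = ∑ x ∈ t, P (x, z) := by
      rw [mul_sub, mul_one, hpa]; linarith [hsplitPz]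
    have h2 : q - EXD ≤ ε := by
      have := (abs_le.mp hadv').1; linarith
    rw [h1]
    linarith [htle, hsplitPX]
  have hTc2 : q ≤ p * (Tr * c) := by
    have : p * (Tr * c) = Tr * c2 := by
      rw [hcdef]; field_simp
    rw [this]; exact hqT
  have hFc2 : 1 - q ≤ p * (Fr * c) := by
    have : p * (Fr * c) = Fr * c2 := by
      rw [hcdef]; field_simp
    rw [this]; exact hqF
  -- total cardinality bound
  have hnat : s.card + t.card = Fintype.card α := by
    rw [hsdef, htdef]
    simpa using Finset.card_filter_add_card_filter_not
      (p := fun x : α => D x = true) (s := (Finset.univ : Finset α))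
  have hcardsum : Tr + Fr = (Fintype.card α : ℝ) := by
    rw [hTrdef, hFrdef, ← Nat.cast_add, hnat]
  have hcard1 : 1 ≤ (Tr + Fr) * c := by
    have h1 : (1:ℝ) ≤ (Fintype.card α : ℝ) * c2 := by
      have : ∑ x : α, Y x ≤ ∑ x : α, c2 := Finset.sum_le_sum fun x _ => hYk x
      rw [Finset.sum_const, nsmul_eq_mul, hY1] at this
      simpa using this
    have h2 : (Fintype.card α : ℝ) * c2 ≤ (Fintype.card α : ℝ) * c := by
      apply mul_le_mul_of_nonneg_left hc2c (by positivity)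
    rw [hcardsum]; linarith
  -- the clamp
  set lo : ℝ := max 0 (1 - Fr * c) with hlodef
  set hi : ℝ := min 1 (Tr * c) with hhidef
  have hlohi : lo ≤ hi := by
    rw [hlodef, hhidef]
    apply max_le
    · exact le_min zero_le_one (by positivity)
    · exact le_min (by linarith [mul_nonneg hFr0 hcpos.le]) (by linarith)
  have hlo0 : (0:ℝ) ≤ lo := le_max_left _ _
  set m : ℝ := min hi (max lo a) with hmdef
  have hm0 : 0 ≤ m := le_min (hlo0.trans hlohi) (le_max_of_le_right ha0)
  have hmhi : m ≤ hi := min_le_left _ _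
  have hmlo : lo ≤ m := le_min hlohi (le_max_left _ _)
  have hm1 : m ≤ 1 := le_trans hmhi (min_le_left _ _)
  have hmTc : m ≤ Tr * c := le_trans hmhi (min_le_right _ _)
  have hmF : 1 - m ≤ Fr * c := by
    have : 1 - Fr * c ≤ lo := le_max_right _ _
    linarith [hmlo]
  -- the distribution
  set Y' : α → ℝ := fun x => if D x = true then m / Tr else (1 - m) / Fr with hY'def
  -- sums of Y'
  have hTzero : Tr = 0 → m = 0 := fun h => le_antisymm (by rw [h, zero_mul] at hmTc; exact hmTc) hm0
  have hFzero : Fr = 0 → m = 1 := fun h => le_antisymm hm1 (by rw [h, zero_mul] at hmF; linarith)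
  have hsumS : ∑ x ∈ s, Y' x = m := by
    have heach : ∀ x ∈ s, Y' x = m / Tr := by
      intro x hx
      rw [hsdef] at hx
      rw [hY'def]
      simp [(Finset.mem_filter.mp hx).2]
    rw [Finset.sum_congr rfl heach, Finset.sum_const, nsmul_eq_mul, ← hTrdef]
    rcases eq_or_ne Tr 0 with h | h
    · rw [h, hTzero h]; simp
    · field_simp
  have hsumT : ∑ x ∈ t, Y' x = 1 - m := by
    have heach : ∀ x ∈ t, Y' x = (1 - m) / Fr := by
      intro x hx
      rw [htdef] at hx
      rw [hY'def]
      simp [(Finset.mem_filter.mp hx).2]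
    rw [Finset.sum_congr rfl heach, Finset.sum_const, nsmul_eq_mul, ← hFrdef]
    rcases eq_or_ne Fr 0 with h | h
    · rw [h, hFzero h]; simp
    · field_simp
  refine ⟨Y', ?_, ?_, ?_, ?_⟩
  · intro x
    rw [hY'def]
    by_cases h : D x = true <;> simp only [h, if_true, if_false]
    · exact div_nonneg hm0 hTr0
    · simp only [Bool.false_eq_true, if_false]
      exact div_nonneg (by linarith) hFr0
  · have : ∑ x, Y' x = (∑ x ∈ s, Y' x) + ∑ x ∈ t, Y' x := by
      rw [hsdef, htdef, Finset.sum_filter_add_sum_filter_not]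
    rw [this, hsumS, hsumT]; ring
  · -- min-entropy bound
    have hcap : (2:ℝ) ^ (-(k - Real.logb 2 (1 / p))) = c := by
      have h2 : (0:ℝ) < 2 := by norm_num
      have he : -(k - Real.logb 2 (1 / p)) = -k + Real.logb 2 (1 / p) := by ring
      rw [he, Real.rpow_add h2, Real.rpow_logb h2 (by norm_num) (by positivity)]
      rw [hcdef, hc2def]
      field_simp
    intro x
    rw [hcap, hY'def]
    by_cases h : D x = true <;> simp only [h, if_true, if_false]
    · rcases eq_or_ne Tr 0 with h0 | h0
      · rw [h0, hTzero h0]; simp [hcpos.le]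
      · have hTpos : 0 < Tr := lt_of_le_of_ne hTr0 (Ne.symm h0)
        rw [div_le_iff₀ hTpos, mul_comm]; exact hmTc
    · simp only [Bool.false_eq_true, if_false]
      rcases eq_or_ne Fr 0 with h0 | h0
      · rw [h0, hFzero h0]; simp [hcpos.le]
      · have hFpos : 0 < Fr := lt_of_le_of_ne hFr0 (Ne.symm h0)
        rw [div_le_iff₀ hFpos, mul_comm]; exact hmF
  · -- the advantage bound
    have hlhs : ∑ x, (P (x, z) / p) * (if D x then (1:ℝ) else 0) = a := by
      rw [hsum_ite, hadef, ← Finset.sum_div]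
    have hrhs : ∑ x, Y' x * (if D x then (1:ℝ) else 0) = m := by
      rw [hsum_ite, hsumS]
    rw [hlhs, hrhs]
    have hεp : 0 ≤ ε / p := div_nonneg hεnn hz.le
    rw [abs_sub_le_iff]
    constructor
    · -- a - m ≤ ε / p
      rcases le_total a hi with hcase | hcase
      · have : a ≤ m := by
          rw [hmdef]
          exact le_min hcase (le_max_right _ _)
        linarith
      · have hmeq : m = hi := by
          rw [hmdef]
          have : max lo a = a := max_eq_right (le_trans hlohi hcase)
          rw [this]
          exact min_eq_left hcase
        rw [hmeq]
        rcases min_cases 1 (Tr * c) with ⟨h1, _⟩ | ⟨h1, _⟩ <;> rw [hhidef, h1]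
        · linarith
        · rw [le_div_iff₀ hz]; linarith [hA, hTc2]
    · -- m - a ≤ ε / p
      rcases le_total lo a with hcase | hcase
      · have : m ≤ a := by
          rw [hmdef]
          exact le_trans (min_le_right _ _) (le_of_eq (max_eq_right hcase))
        linarith
      · have hmeq : m = lo := by
          rw [hmdef]
          have h1 : max lo a = lo := max_eq_left hcase
          rw [h1]
          exact min_eq_right hlohi
        rw [hmeq]
        rcases max_cases 0 (1 - Fr * c) with ⟨h1, _⟩ | ⟨h1, _⟩ <;> rw [hlodef, h1]
        · linarith
        · rw [le_div_iff₀ hz]; linarith [hB, hFc2]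
end

section
/- Let 𝒳, 𝒵₁, 𝒵₂ be finite sets with |𝒵₂| ≤ 2^{m₂}, and let (X, Z₁, Z₂) be jointly distributed random variables on 𝒳 × 𝒵₁ × 𝒵₂. Fix a function D : 𝒳 × 𝒵₁ × 𝒵₂ → {0,1} and ε ≥ 0, k ≥ 0. Suppose for every z₂ ∈ 𝒵₂ there exists a pair (Y^{z₂}, Z₁) with the same marginal Z₁ such that H̃∞(Y^{z₂}|Z₁) ≥ k and E_{z₁←Z₁}|E_{x←X|Z₁=z₁} D(x,z₁,z₂) − E_{x←Y^{z₂}|Z₁=z₁} D(x,z₁,z₂)| ≤ ε. Then there exists a pair (Y, (Z₁,Z₂)) with the same marginal (Z₁,Z₂) such that H̃∞(Y | (Z₁,Z₂)) ≥ k − m₂ and E_{(z₁,z₂)←(Z₁,Z₂)}|E_{x←X|Z₁=z₁,Z₂=z₂} D(x,z₁,z₂) − E_{x←Y|Z₁=z₁,Z₂=z₂} D(x,z₁,z₂)| ≤ 2^{m₂}·ε. -/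
open scoped Classical
open Finset

private lemma bddR {α : Type*} [Fintype α] (f : α → ℝ) : BddAbove (Set.range f) :=
  (Set.finite_range f).bddAbove

private lemma cell {α : Type*} [Fintype α] [Nonempty α]
    (d q p' u : α → ℝ)
    (hd : ∀ x, d x = 0 ∨ d x = 1)
    (hq : ∀ x, 0 ≤ q x) (hp' : ∀ x, 0 ≤ p' x)
    (hu0 : ∀ x, 0 ≤ u x) (hpu : ∀ x, p' x ≤ u x)
    (hqu : ∑ x, q x = ∑ x, u x) :
    ∃ r : α → ℝ, (∀ x, 0 ≤ r x) ∧ (∑ x, r x = ∑ x, p' x) ∧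
      ((∑ x, p' x) * (⨆ x, r x / ∑ x', p' x') ≤ (∑ x, u x) * (⨆ x, q x / ∑ x', u x')) ∧
      ((∑ x, p' x) * |(∑ x, (p' x / ∑ x', p' x') * d x) - (∑ x, (r x / ∑ x', p' x') * d x)| ≤
       (∑ x, u x) * |(∑ x, (u x / ∑ x', u x') * d x) - (∑ x, (q x / ∑ x', u x') * d x)|) := by
  classical
  have hd0 : ∀ x, 0 ≤ d x := fun x => by rcases hd x with h | h <;> simp [h]
  have hd1 : ∀ x, d x ≤ 1 := fun x => by rcases hd x with h | h <;> simp [h]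
  set T := ∑ x, p' x with hTdef
  set S := ∑ x, u x with hSdef
  set M := ⨆ x, q x with hMdef
  set n1 := (univ.filter fun x => d x = 1).card with hn1def
  set n0 := (univ.filter fun x => ¬ d x = 1).card with hn0def
  set t1 := ∑ x, p' x * d x with ht1def
  set s1 := ∑ x, u x * d x with hs1def
  set c1 := ∑ x, q x * d x with hc1def
  set lo := max 0 (T - M * n0) with hlodef
  set hi := min T (M * n1) with hhidef
  set ρ := max lo (min hi t1) with hρdef
  have hT0 : 0 ≤ T := sum_nonneg fun x _ => hp' x
  have hS0 : 0 ≤ S := sum_nonneg fun x _ => hu0 x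
  have hTS : T ≤ S := sum_le_sum fun x _ => hpu x
  have hMx : ∀ x, q x ≤ M := fun x => le_ciSup (bddR q) x
  have hM0 : 0 ≤ M := le_trans (hq (Classical.arbitrary α)) (hMx _)
  have hc1M : c1 ≤ M * n1 := by
    have h1 : c1 ≤ ∑ x, (if d x = 1 then M else 0) := by
      apply sum_le_sum; intro x _
      rcases hd x with h | h
      · simp [h]
      · simp [h, hMx x]
    calc c1 ≤ _ := h1
      _ = M * n1 := by
        rw [Finset.sum_ite, Finset.sum_const, Finset.sum_const_zero, hn1def]
        simp [mul_comm]
  have hc0M : S - c1 ≤ M * n0 := by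
    have h1 : S - c1 = ∑ x, (q x - q x * d x) := by
      rw [Finset.sum_sub_distrib, ← hc1def, hqu]
    rw [h1]
    have h2 : ∑ x, (q x - q x * d x) ≤ ∑ x, (if d x = 1 then 0 else M) := by
      apply sum_le_sum; intro x _
      rcases hd x with h | h
      · simp [h, hMx x]
      · simp [h]
    calc ∑ x, (q x - q x * d x) ≤ _ := h2
      _ = M * n0 := by
        rw [Finset.sum_ite, Finset.sum_const, Finset.sum_const, hn0def]
        simp [mul_comm]
  have ht1s1 : t1 ≤ s1 := sum_le_sum fun x _ => mul_le_mul_of_nonneg_right (hpu x) (hd0 x)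
  have ht0s0 : T - t1 ≤ S - s1 := by
    have h1 : T - t1 = ∑ x, (p' x - p' x * d x) := by rw [Finset.sum_sub_distrib]
    have h2 : S - s1 = ∑ x, (u x - u x * d x) := by rw [Finset.sum_sub_distrib]
    rw [h1, h2]
    apply sum_le_sum; intro x _
    have := hd1 x
    nlinarith [hpu x, hd0 x]
  have ht10 : 0 ≤ t1 := sum_nonneg fun x _ => mul_nonneg (hp' x) (hd0 x)
  have ht1T : t1 ≤ T := sum_le_sum fun x _ => mul_le_of_le_one_right (hp' x) (hd1 x)
  have hcard : (n1 : ℝ) + n0 = Fintype.card α := by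
    rw [hn1def, hn0def]
    have h := Finset.card_filter_add_card_filter_not (s := (univ : Finset α))
      (p := fun x => d x = 1)
    rw [Finset.card_univ] at h
    exact_mod_cast congrArg (Nat.cast : ℕ → ℝ) h
  have hSM : S ≤ M * Fintype.card α := by
    have h1 : S = ∑ x, q x := hqu.symm
    calc S = ∑ x, q x := h1
      _ ≤ ∑ _x : α, M := sum_le_sum fun x _ => hMx x
      _ = M * Fintype.card α := by simp [mul_comm]
  have hlohi : lo ≤ hi := by
    apply max_le
    · exact le_min hT0 (mul_nonneg hM0 (Nat.cast_nonneg _))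
    · apply le_min
      · nlinarith [mul_nonneg hM0 (Nat.cast_nonneg n0 : (0:ℝ) ≤ (n0:ℝ))]
      · nlinarith [hTS, hSM, hcard]
  have hρlo : lo ≤ ρ := le_max_left _ _
  have hρhi : ρ ≤ hi := max_le hlohi (min_le_left _ _)
  have hρ0 : 0 ≤ ρ := le_trans (le_max_left 0 _) hρlo
  have hρT : ρ ≤ T := hρhi.trans (min_le_left _ _)
  have hρn1 : ρ ≤ M * n1 := hρhi.trans (min_le_right _ _)
  have hρn0 : T - ρ ≤ M * n0 := by
    have := le_trans (le_max_right 0 (T - M * n0)) hρlo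
    linarith
  -- key distance bound
  have key1 : |t1 - ρ| ≤ |s1 - c1| := by
    have habs1 : s1 - c1 ≤ |s1 - c1| := le_abs_self _
    have habs2 : c1 - s1 ≤ |s1 - c1| := by rw [abs_sub_comm]; exact le_abs_self _
    have habs0 : 0 ≤ |s1 - c1| := abs_nonneg _
    rw [abs_sub_le_iff]
    constructor
    · have h1 : min hi t1 ≤ ρ := le_max_right _ _
      rcases le_total t1 hi with h | h
      · rw [min_eq_right h] at h1; linarith
      · rw [min_eq_left h] at h1
        rcases le_total T (M * n1) with h2 | h2
        · rw [hhidef, min_eq_left h2] at h1; linarith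
        · rw [hhidef, min_eq_right h2] at h1; linarith
    · have h1 : ρ ≤ max lo t1 :=
        max_le (le_max_left _ _) ((min_le_right hi t1).trans (le_max_right _ _))
      rcases le_total lo t1 with h | h
      · rw [max_eq_right h] at h1; linarith
      · rw [max_eq_left h] at h1
        rcases le_total (T - M * n0) 0 with h2 | h2
        · rw [hlodef, max_eq_left h2] at h1; linarith
        · rw [hlodef, max_eq_right h2] at h1; linarith
  -- the construction
  set r : α → ℝ := fun x => if d x = 1 then ρ / n1 else (T - ρ) / n0 with hrdef
  have hn1z : (n1:ℝ) = 0 → ρ = 0 := by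
    intro h
    have : ρ ≤ 0 := by rw [h, mul_zero] at hρn1; exact hρn1
    linarith
  have hn0z : (n0:ℝ) = 0 → T - ρ = 0 := by
    intro h
    have : T - ρ ≤ 0 := by rw [h, mul_zero] at hρn0; exact hρn0
    linarith
  have e1 : (n1:ℝ) * (ρ / n1) = ρ := by
    rcases eq_or_ne (n1:ℝ) 0 with h | h
    · rw [h, hn1z h]; simp
    · field_simp
  have e0 : (n0:ℝ) * ((T - ρ) / n0) = T - ρ := by
    rcases eq_or_ne (n0:ℝ) 0 with h | h
    · rw [h, hn0z h]; simp
    · field_simp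
  have hr0 : ∀ x, 0 ≤ r x := by
    intro x
    rw [hrdef]
    dsimp only
    split_ifs
    · exact div_nonneg hρ0 (Nat.cast_nonneg _)
    · exact div_nonneg (by linarith) (Nat.cast_nonneg _)
  have hrM : ∀ x, r x ≤ M := by
    intro x
    rw [hrdef]
    dsimp only
    split_ifs
    · rcases eq_or_ne (n1:ℝ) 0 with h | h
      · rw [h, hn1z h]; simpa using hM0
      · have hpos : (0:ℝ) < n1 := lt_of_le_of_ne (Nat.cast_nonneg _) (Ne.symm h)
        rw [div_le_iff₀ hpos]
        linarith [hρn1]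
    · rcases eq_or_ne (n0:ℝ) 0 with h | h
      · rw [h, hn0z h]; simpa using hM0
      · have hpos : (0:ℝ) < n0 := lt_of_le_of_ne (Nat.cast_nonneg _) (Ne.symm h)
        rw [div_le_iff₀ hpos]
        linarith [hρn0]
  have hrsum : ∑ x, r x = T := by
    rw [hrdef]
    dsimp only
    rw [Finset.sum_ite, Finset.sum_const, Finset.sum_const, ← hn1def, ← hn0def,
      nsmul_eq_mul, nsmul_eq_mul, e1, e0]
    ring
  have hrd : ∑ x, r x * d x = ρ := by
    have h1 : ∀ x, r x * d x = if d x = 1 then ρ / n1 else 0 := by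
      intro x
      rw [hrdef]
      dsimp only
      rcases hd x with h | h
      · have : ¬ d x = 1 := by rw [h]; norm_num
        simp [this, h]
      · simp [h]
    rw [Finset.sum_congr rfl fun x _ => h1 x, Finset.sum_ite, Finset.sum_const,
      Finset.sum_const_zero, ← hn1def, nsmul_eq_mul, e1, add_zero]
  refine ⟨r, hr0, hrsum, ?_, ?_⟩
  · -- entropy
    rcases hT0.lt_or_eq with hTpos | hTz
    · have hSpos : 0 < S := lt_of_lt_of_le hTpos hTS
      have h1 : (⨆ x, r x / T) ≤ M / T := by
        apply ciSup_le
        intro x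
        gcongr
        exact hrM x
      have h2 : T * (⨆ x, r x / T) ≤ T * (M / T) := mul_le_mul_of_nonneg_left h1 hTpos.le
      have h3 : T * (M / T) = M := by field_simp
      have h4 : M ≤ S * ⨆ x, q x / S := by
        rw [hMdef]
        apply ciSup_le
        intro x
        have h5 : q x / S ≤ ⨆ x, q x / S := le_ciSup (f := fun x => q x / S) (bddR _) x
        calc q x = S * (q x / S) := by field_simp
          _ ≤ S * ⨆ x, q x / S := mul_le_mul_of_nonneg_left h5 hS0
      linarith
    · rw [← hTz, zero_mul]
      have h5 : (0:ℝ) ≤ q (Classical.arbitrary α) / S := div_nonneg (hq _) hS0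
      exact mul_nonneg hS0 (le_trans h5 (le_ciSup (f := fun x => q x / S) (bddR _) _))
  · -- advantage
    rcases hT0.lt_or_eq with hTpos | hTz
    · have hSpos : 0 < S := lt_of_lt_of_le hTpos hTS
      have hA : (∑ x, (p' x / T) * d x) = t1 / T := by
        rw [ht1def, Finset.sum_div]
        exact Finset.sum_congr rfl fun x _ => by ring
      have hB : (∑ x, (r x / T) * d x) = ρ / T := by
        rw [← hrd, Finset.sum_div]
        exact Finset.sum_congr rfl fun x _ => by ring
      have hC : (∑ x, (u x / S) * d x) = s1 / S := by
        rw [hs1def, Finset.sum_div]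
        exact Finset.sum_congr rfl fun x _ => by ring
      have hD' : (∑ x, (q x / S) * d x) = c1 / S := by
        rw [hc1def, Finset.sum_div]
        exact Finset.sum_congr rfl fun x _ => by ring
      have ecan : ∀ (a b : ℝ), 0 < b → b * |a / b| = |a| := by
        intro a b hb
        rw [abs_div, abs_of_pos hb]
        field_simp
      rw [hA, hB, hC, hD', div_sub_div_same, div_sub_div_same, ecan _ _ hTpos,
        ecan _ _ hSpos]
      exact key1
    · rw [← hTz, zero_mul]
      exact mul_nonneg hS0 (abs_nonneg _)

/-- Chain rule for modulus entropy (statistical core): if for every `z₂` there is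
`(Y^{z₂}, Z₁)` with `H̃∞(Y^{z₂}|Z₁) ≥ k` fooling `D(·,·,z₂)` in modulus up to `ε`, then
there is `(Y, (Z₁,Z₂))` with `H̃∞(Y|(Z₁,Z₂)) ≥ k − m₂` fooling `D` in modulus up to `2^{m₂} ε`. -/
theorem stmt8 {α ζ₁ ζ₂ : Type*} [Fintype α] [Fintype ζ₁] [Fintype ζ₂] [Nonempty α]
    (P : α × ζ₁ × ζ₂ → ℝ) (hP0 : ∀ p, 0 ≤ P p) (hP1 : ∑ p, P p = 1)
    (m₂ : ℝ) (hm₂ : (Fintype.card ζ₂ : ℝ) ≤ (2:ℝ) ^ m₂)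
    (D : α → ζ₁ → ζ₂ → ℝ) (hD : ∀ x z₁ z₂, D x z₁ z₂ = 0 ∨ D x z₁ z₂ = 1)
    (ε k : ℝ) (hε : 0 ≤ ε) (hk : 0 ≤ k)
    (h : ∀ z₂ : ζ₂, ∃ Q : α × ζ₁ → ℝ,
      (∀ p, 0 ≤ Q p) ∧ (∑ p, Q p = 1) ∧
      (∀ z₁, ∑ x, Q (x, z₁) = ∑ x, ∑ w, P (x, z₁, w)) ∧
      (∑ z₁, (∑ x, ∑ w, P (x, z₁, w)) *
          (⨆ x, Q (x, z₁) / ∑ x', ∑ w, P (x', z₁, w)) ≤ (2:ℝ) ^ (-k)) ∧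
      (∑ z₁, (∑ x, ∑ w, P (x, z₁, w)) *
          |(∑ x, ((∑ w, P (x, z₁, w)) / ∑ x', ∑ w, P (x', z₁, w)) * D x z₁ z₂) -
           (∑ x, (Q (x, z₁) / ∑ x', ∑ w, P (x', z₁, w)) * D x z₁ z₂)| ≤ ε)) :
    ∃ R : α × ζ₁ × ζ₂ → ℝ,
      (∀ p, 0 ≤ R p) ∧ (∑ p, R p = 1) ∧
      (∀ z : ζ₁ × ζ₂, ∑ x, R (x, z) = ∑ x, P (x, z)) ∧
      (∑ z : ζ₁ × ζ₂, (∑ x, P (x, z)) *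
          (⨆ x, R (x, z) / ∑ x', P (x', z)) ≤ (2:ℝ) ^ (-(k - m₂))) ∧
      (∑ z : ζ₁ × ζ₂, (∑ x, P (x, z)) *
          |(∑ x, (P (x, z) / ∑ x', P (x', z)) * D x z.1 z.2) -
           (∑ x, (R (x, z) / ∑ x', P (x', z)) * D x z.1 z.2)| ≤ (2:ℝ) ^ m₂ * ε) := by
  classical
  choose Q hQ0 hQ1 hQmarg hQent hQadv using h
  have key : ∀ z : ζ₁ × ζ₂, ∃ r : α → ℝ, (∀ x, 0 ≤ r x) ∧ (∑ x, r x = ∑ x, P (x, z)) ∧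
      ((∑ x, P (x, z)) * (⨆ x, r x / ∑ x', P (x', z)) ≤
        (∑ x, ∑ w, P (x, z.1, w)) * (⨆ x, Q z.2 (x, z.1) / ∑ x', ∑ w, P (x', z.1, w))) ∧
      ((∑ x, P (x, z)) * |(∑ x, (P (x, z) / ∑ x', P (x', z)) * D x z.1 z.2) -
          (∑ x, (r x / ∑ x', P (x', z)) * D x z.1 z.2)| ≤
        (∑ x, ∑ w, P (x, z.1, w)) *
          |(∑ x, ((∑ w, P (x, z.1, w)) / ∑ x', ∑ w, P (x', z.1, w)) * D x z.1 z.2) -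
           (∑ x, (Q z.2 (x, z.1) / ∑ x', ∑ w, P (x', z.1, w)) * D x z.1 z.2)|) := by
    intro z
    exact cell (fun x => D x z.1 z.2) (fun x => Q z.2 (x, z.1)) (fun x => P (x, z))
      (fun x => ∑ w, P (x, z.1, w)) (fun x => hD x z.1 z.2) (fun x => hQ0 z.2 (x, z.1))
      (fun x => hP0 (x, z)) (fun x => sum_nonneg fun w _ => hP0 _)
      (fun x => Finset.single_le_sum (f := fun w => P (x, z.1, w))
        (fun w _ => hP0 (x, z.1, w)) (mem_univ z.2))
      (hQmarg z.2 z.1)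
  choose r hr0 hrsum hrent hradv using key
  refine ⟨fun p => r p.2 p.1, fun p => hr0 p.2 p.1, ?_, fun z => hrsum z, ?_, ?_⟩
  · -- total mass
    calc (∑ p : α × ζ₁ × ζ₂, r p.2 p.1)
        = ∑ x, ∑ z : ζ₁ × ζ₂, r z x := Fintype.sum_prod_type _
      _ = ∑ z : ζ₁ × ζ₂, ∑ x, r z x := Finset.sum_comm
      _ = ∑ z : ζ₁ × ζ₂, ∑ x, P (x, z) := Finset.sum_congr rfl fun z _ => hrsum z
      _ = ∑ x, ∑ z : ζ₁ × ζ₂, P (x, z) := Finset.sum_comm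
      _ = ∑ p : α × ζ₁ × ζ₂, P p := (Fintype.sum_prod_type _).symm
      _ = 1 := hP1
  · -- entropy
    have h2pos : (0:ℝ) < 2 := by norm_num
    calc (∑ z : ζ₁ × ζ₂, (∑ x, P (x, z)) * (⨆ x, r z x / ∑ x', P (x', z)))
        = ∑ z₁, ∑ z₂, (∑ x, P (x, z₁, z₂)) *
            (⨆ x, r (z₁, z₂) x / ∑ x', P (x', z₁, z₂)) := Fintype.sum_prod_type _
      _ = ∑ z₂, ∑ z₁, (∑ x, P (x, z₁, z₂)) *
            (⨆ x, r (z₁, z₂) x / ∑ x', P (x', z₁, z₂)) := Finset.sum_comm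
      _ ≤ ∑ z₂ : ζ₂, (2:ℝ) ^ (-k) := by
          apply Finset.sum_le_sum
          intro z₂ _
          calc (∑ z₁, (∑ x, P (x, z₁, z₂)) * (⨆ x, r (z₁, z₂) x / ∑ x', P (x', z₁, z₂)))
              ≤ ∑ z₁, (∑ x, ∑ w, P (x, z₁, w)) *
                  (⨆ x, Q z₂ (x, z₁) / ∑ x', ∑ w, P (x', z₁, w)) :=
                Finset.sum_le_sum fun z₁ _ => hrent (z₁, z₂)
            _ ≤ (2:ℝ) ^ (-k) := hQent z₂
      _ = (Fintype.card ζ₂ : ℝ) * (2:ℝ) ^ (-k) := by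
          rw [Finset.sum_const, Finset.card_univ, nsmul_eq_mul]
      _ ≤ (2:ℝ) ^ m₂ * (2:ℝ) ^ (-k) :=
          mul_le_mul_of_nonneg_right hm₂ (Real.rpow_nonneg (by norm_num) _)
      _ = (2:ℝ) ^ (-(k - m₂)) := by
          rw [← Real.rpow_add h2pos]; ring_nf
  · -- advantage
    calc (∑ z : ζ₁ × ζ₂, (∑ x, P (x, z)) *
          |(∑ x, (P (x, z) / ∑ x', P (x', z)) * D x z.1 z.2) -
           (∑ x, (r z x / ∑ x', P (x', z)) * D x z.1 z.2)|)
        = ∑ z₁, ∑ z₂, (∑ x, P (x, z₁, z₂)) *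
            |(∑ x, (P (x, z₁, z₂) / ∑ x', P (x', z₁, z₂)) * D x z₁ z₂) -
             (∑ x, (r (z₁, z₂) x / ∑ x', P (x', z₁, z₂)) * D x z₁ z₂)| :=
          Fintype.sum_prod_type _
      _ = ∑ z₂, ∑ z₁, (∑ x, P (x, z₁, z₂)) *
            |(∑ x, (P (x, z₁, z₂) / ∑ x', P (x', z₁, z₂)) * D x z₁ z₂) -
             (∑ x, (r (z₁, z₂) x / ∑ x', P (x', z₁, z₂)) * D x z₁ z₂)| := Finset.sum_comm
      _ ≤ ∑ _z₂ : ζ₂, ε := by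
          apply Finset.sum_le_sum
          intro z₂ _
          calc (∑ z₁, (∑ x, P (x, z₁, z₂)) *
                |(∑ x, (P (x, z₁, z₂) / ∑ x', P (x', z₁, z₂)) * D x z₁ z₂) -
                 (∑ x, (r (z₁, z₂) x / ∑ x', P (x', z₁, z₂)) * D x z₁ z₂)|)
              ≤ ∑ z₁, (∑ x, ∑ w, P (x, z₁, w)) *
                  |(∑ x, ((∑ w, P (x, z₁, w)) / ∑ x', ∑ w, P (x', z₁, w)) * D x z₁ z₂) -
                   (∑ x, (Q z₂ (x, z₁) / ∑ x', ∑ w, P (x', z₁, w)) * D x z₁ z₂)| :=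
                Finset.sum_le_sum fun z₁ _ => hradv (z₁, z₂)
            _ ≤ ε := hQadv z₂
      _ = (Fintype.card ζ₂ : ℝ) * ε := by
          rw [Finset.sum_const, Finset.card_univ, nsmul_eq_mul]
      _ ≤ (2:ℝ) ^ m₂ * ε := mul_le_mul_of_nonneg_right hm₂ hε
end

section
/- Let μ, ν be distributions on a finite set 𝒳, D : 𝒳 → [0,1] with E_{x←μ}D(x) − E_{x←ν}D(x) ≥ ε, where ν maximizes E D over all distributions with min-entropy at least k, i.e. ν is uniform on a set Max^k_D of 2^k points where D is largest. Then there exists t ∈ [0,1) such that the boolean function D''(x) = 1_{D(x) > t} satisfies E_{x←μ}D''(x) − max_{Y : H∞(Y) ≥ k} E_{x←Y}D''(x) ≥ ε. -/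
/-!
Write `c = μ - ν`, where `ν` is the flat distribution on `S`. By the tail-integral identity
`D x = ∫₀¹ 1[t < D x] dt`, the advantage `∑ c D` is the average over `t ∈ (0,1)` of
`∑_{D x > t} c x`, so some threshold `t` does at least as well. The upper level set
`{D > t}` is comparable with the top set `S` under inclusion, and on such a set no
distribution with min-entropy `k` puts more mass than `ν` does.
-/

open scoped Classical
open Finset MeasureTheory

theorem integral_Ioo_indicator_Iio {a : ℝ} (ha : a ∈ Set.Icc (0 : ℝ) 1) (c : ℝ) :
    ∫ t in Set.Ioo (0 : ℝ) 1, (Set.Iio a).indicator (fun _ => c) t = a * c := by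
  have hIoo : Set.Ioo (0 : ℝ) 1 ∩ Set.Iio a = Set.Ioo 0 a := by
    ext t
    simp only [Set.mem_inter_iff, Set.mem_Ioo, Set.mem_Iio]
    constructor
    · rintro ⟨⟨ht0, -⟩, hta⟩; exact ⟨ht0, hta⟩
    · rintro ⟨ht0, hta⟩; exact ⟨⟨ht0, hta.trans_le ha.2⟩, hta⟩
  rw [setIntegral_indicator measurableSet_Iio, hIoo, setIntegral_const,
    Real.volume_real_Ioo_of_le ha.1, sub_zero, smul_eq_mul]

section Threshold

variable {α : Type*} [Fintype α]

theorem sum_filter_lt_eq_sum_indicator (c D : α → ℝ) (t : ℝ) :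
    ∑ x ∈ univ.filter (fun x => t < D x), c x =
      ∑ x, (Set.Iio (D x)).indicator (fun _ => c x) t := by
  simp only [sum_filter, Set.indicator_apply, Set.mem_Iio]

theorem sum_mul_eq_integral_sum_filter_lt (c D : α → ℝ) (hD : ∀ x, D x ∈ Set.Icc (0 : ℝ) 1) :
    ∑ x, c x * D x = ∫ t in Set.Ioo (0 : ℝ) 1, ∑ x ∈ univ.filter (fun x => t < D x), c x := by
  simp only [sum_filter_lt_eq_sum_indicator]
  rw [integral_finsetSum]
  · simp only [integral_Ioo_indicator_Iio (hD _), mul_comm]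
  · exact fun x _ => (integrableOn_const (by simp)).indicator measurableSet_Iio

theorem exists_threshold_le_sum_filter_lt (c D : α → ℝ) (hD : ∀ x, D x ∈ Set.Icc (0 : ℝ) 1) :
    ∃ t ∈ Set.Ioo (0 : ℝ) 1, ∑ x, c x * D x ≤ ∑ x ∈ univ.filter (fun x => t < D x), c x := by
  have hvol : volume (Set.Ioo (0 : ℝ) 1) = 1 := by simp
  have hint : IntegrableOn (fun t => ∑ x ∈ univ.filter (fun x => t < D x), c x)
      (Set.Ioo 0 1) := by
    simp only [sum_filter_lt_eq_sum_indicator]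
    exact integrable_finsetSum _ fun x _ =>
      (integrableOn_const (by simp)).indicator measurableSet_Iio
  obtain ⟨t, ht, hle⟩ := exists_setAverage_le (by simp [hvol]) (by simp [hvol]) hint
  refine ⟨t, ht, ?_⟩
  rwa [setAverage_eq, measureReal_def, hvol, ENNReal.toReal_one, inv_one, one_smul,
    ← sum_mul_eq_integral_sum_filter_lt c D hD] at hle

theorem filter_lt_subset_or_subset {D : α → ℝ} {S : Finset α}
    (hStop : ∀ x ∈ S, ∀ x' ∉ S, D x' ≤ D x) (t : ℝ) :
    univ.filter (fun x => t < D x) ⊆ S ∨ S ⊆ univ.filter (fun x => t < D x) := by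
  by_contra! ⟨hnotsub, hnotsup⟩
  obtain ⟨x', hx', hx'S⟩ := not_subset.1 hnotsub
  obtain ⟨x, hxS, hx⟩ := not_subset.1 hnotsup
  simp only [mem_filter, mem_univ, true_and, not_lt] at hx hx'
  exact (hx'.trans_le (hStop x hxS x' hx'S)).not_ge hx

theorem sum_le_card_inter_mul {Y : α → ℝ} {p : ℝ} {A S : Finset α}
    (hY0 : ∀ x, 0 ≤ Y x) (hY1 : ∑ x, Y x = 1) (hYp : ∀ x, Y x ≤ p) (hSp : #S * p = 1)
    (hAS : A ⊆ S ∨ S ⊆ A) : ∑ x ∈ A, Y x ≤ #(A ∩ S) * p := by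
  rcases hAS with hAS | hSA
  · rw [inter_eq_left.2 hAS, ← nsmul_eq_mul, ← sum_const]
    exact sum_le_sum fun x _ => hYp x
  · rw [inter_eq_right.2 hSA, hSp, ← hY1]
    exact sum_le_sum_of_subset_of_nonneg (subset_univ A) fun x _ _ => hY0 x

end Threshold

theorem stmt16_general {α : Type*} [Fintype α]
    (μ : α → ℝ)
    (D : α → ℝ) (hD : ∀ x, D x ∈ Set.Icc (0:ℝ) 1)
    (k : ℕ)
    (S : Finset α) (hScard : S.card = 2 ^ k)
    (hStop : ∀ x ∈ S, ∀ x' ∉ S, D x' ≤ D x)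
    (ε : ℝ)
    (hadv : ε ≤ (∑ x, μ x * D x) - ∑ x ∈ S, ((2:ℝ) ^ k)⁻¹ * D x) :
    ∃ t : ℝ, 0 ≤ t ∧ t < 1 ∧
      ∀ Y : α → ℝ, (∀ x, 0 ≤ Y x) → (∑ x, Y x = 1) →
        (∀ x, Y x ≤ ((2:ℝ) ^ k)⁻¹) →
        ε ≤ (∑ x ∈ Finset.univ.filter (fun x => t < D x), μ x) -
            ∑ x ∈ Finset.univ.filter (fun x => t < D x), Y x := by
  set p : ℝ := ((2:ℝ) ^ k)⁻¹
  set ν : α → ℝ := fun x => if x ∈ S then p else 0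
  have hSp : #S * p = 1 := by
    rw [hScard, Nat.cast_pow, Nat.cast_ofNat, mul_inv_cancel₀ (by positivity)]
  have hνD : ∑ x, ν x * D x = ∑ x ∈ S, p * D x := by
    simp only [ν, ite_mul, zero_mul, sum_ite_mem, univ_inter]
  have hνA : ∀ A : Finset α, ∑ x ∈ A, ν x = #(A ∩ S) * p := fun A => by
    simp only [ν, sum_ite_mem, sum_const, nsmul_eq_mul]
  obtain ⟨t, ht, hle⟩ := exists_threshold_le_sum_filter_lt (fun x => μ x - ν x) D hD
  refine ⟨t, ht.1.le, ht.2, fun Y hY0 hY1 hYp => ?_⟩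
  have hY := sum_le_card_inter_mul hY0 hY1 hYp hSp (filter_lt_subset_or_subset hStop t)
  simp only [sub_mul, sum_sub_distrib, hνD, hνA] at hle
  linarith

/-- From a real-valued distinguisher with advantage `ε` against the optimal flat
min-entropy-`k` distribution, some threshold yields a boolean distinguisher with
advantage `ε` against *all* min-entropy-`k` distributions. -/
theorem stmt16 {α : Type*} [Fintype α]
    (μ : α → ℝ) (hμ0 : ∀ x, 0 ≤ μ x) (hμ1 : ∑ x, μ x = 1)
    (D : α → ℝ) (hD : ∀ x, D x ∈ Set.Icc (0:ℝ) 1)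
    (k : ℕ) (hk : 2 ^ k ≤ Fintype.card α)
    (S : Finset α) (hScard : S.card = 2 ^ k)
    (hStop : ∀ x ∈ S, ∀ x' ∉ S, D x' ≤ D x)
    (ε : ℝ) (hε : 0 < ε)
    (hadv : ε ≤ (∑ x, μ x * D x) - ∑ x ∈ S, ((2:ℝ) ^ k)⁻¹ * D x) :
    ∃ t : ℝ, 0 ≤ t ∧ t < 1 ∧
      ∀ Y : α → ℝ, (∀ x, 0 ≤ Y x) → (∑ x, Y x = 1) →
        (∀ x, Y x ≤ ((2:ℝ) ^ k)⁻¹) →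
        ε ≤ (∑ x ∈ Finset.univ.filter (fun x => t < D x), μ x) -
            ∑ x ∈ Finset.univ.filter (fun x => t < D x), Y x :=
  stmt16_general μ D hD k S hScard hStop ε hadv
end

section
/- Let (X,Z) be jointly distributed random variables on finite sets 𝒳 × 𝒵, D : 𝒳 × 𝒵 → {0,1}, and ε > 0, k ≥ 0 with 2^k ≤ |𝒳|. Suppose that for every (Y,Z) with the same marginal Z and H∞(Y|Z=z) ≥ k for all z, we have E_{z←Z}|E_{x←X|Z=z}D(x,z) − E_{x←Y|Z=z}D(x,z)| ≥ ε. Then either for D' = D or for D' = 1−D, it holds that for all such (Y,Z): P_{(x,z)←(X,Z)}[D'(x,z) − E_{x'←Y|Z=z}D'(x',z) ≥ ε/4] ≥ ε²/16. -/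
open scoped Classical
open Finset

/-!
Suppose both `D` and `1 - D` fail, witnessed by `Q₁` and `Q₂`, each putting mass `< ε/4` on the
tail event. A Markov-type bound turns small tail mass into small one-sided advantage: the positive
part of `E[D | z] - E_{Q₁}[D | z]` averages to `< ε/2`, and so does the positive part of
`E_{Q₂}[D | z] - E[D | z]`. Since the set of admissible `Q` is convex fiber by fiber, mixing `Q₁`
and `Q₂` separately in each fiber `Z = z` moves `E_Q[D | z]` onto `E[D | z]` or as close to it as
the two one-sided gaps allow. The mixture then has advantage `< ε`, contradicting the hypothesis.
This gives tail mass `≥ ε/4`, and `ε²/16 ≤ ε/4` because the tail mass is at most `1`.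
-/

theorem sum_mul_le_mul_sum_add_sum_filter {ι : Type*} (s : Finset ι) {r g : ι → ℝ}
    (hr : ∀ i ∈ s, 0 ≤ r i) (hg : ∀ i ∈ s, g i ≤ 1) {δ : ℝ} (hδ : 0 ≤ δ) :
    ∑ i ∈ s, r i * g i ≤ δ * ∑ i ∈ s, r i + ∑ i ∈ s with δ ≤ g i, r i := by
  rw [sum_filter, mul_sum, ← sum_add_distrib]
  gcongr with i hi
  have := hr i hi
  have := hg i hi
  split_ifs <;> nlinarith

theorem sum_mul_sum_div_mul {ι : Type*} (s : Finset ι) {r : ι → ℝ} (hr : ∀ i ∈ s, 0 ≤ r i)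
    (f : ι → ℝ) :
    (∑ i ∈ s, r i) * ∑ i ∈ s, r i / (∑ j ∈ s, r j) * f i = ∑ i ∈ s, r i * f i := by
  rcases eq_or_ne (∑ i ∈ s, r i) 0 with h | h
  · have hr0 := (sum_eq_zero_iff_of_nonneg hr).1 h
    rw [h, zero_mul]
    exact (sum_eq_zero fun i hi => by rw [hr0 i hi, zero_mul]).symm
  · rw [mul_sum]
    exact sum_congr rfl fun i _ => by field_simp

theorem exists_mem_segment_abs_sub_le (e b₁ b₂ : ℝ) :
    ∃ c ∈ segment ℝ b₁ b₂, |e - c| ≤ max (e - b₁) 0 + max (b₂ - e) 0 := by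
  refine ⟨max b₂ (min e b₁), ?_, ?_⟩
  · rw [segment_eq_uIcc, Set.mem_uIcc]
    grind
  · rw [abs_le]
    constructor <;> grind

noncomputable section

variable {α ζ : Type*} [Fintype α]

/-- The weights `Q` on `α × ζ` describe a pair `(Y, Z)` with the `Z`-marginal of `P` and
`P[Y = x | Z = z] ≤ c`, i.e. `H∞(Y | Z = z) ≥ log₂ (1 / c)`. -/
structure IsMinEntropyCoupling (P : α × ζ → ℝ) (c : ℝ) (Q : α × ζ → ℝ) : Prop where
  nonneg : ∀ p, 0 ≤ Q p
  marginal_eq : ∀ z, ∑ x, Q (x, z) = ∑ x, P (x, z)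
  le_mul_marginal : ∀ z, 0 < ∑ x, P (x, z) → ∀ x, Q (x, z) ≤ c * ∑ x', P (x', z)

/-- `E_{x ← Q | Z = z} f(x, z)`, normalised by the `Z`-marginal of `P`, which `Q` shares. -/
def condMean (P Q : α × ζ → ℝ) (f : α → ζ → ℝ) (z : ζ) : ℝ :=
  ∑ x, (Q (x, z) / ∑ x', P (x', z)) * f x z

def fiberMix (a b : ζ → ℝ) (Q₁ Q₂ : α × ζ → ℝ) : α × ζ → ℝ :=
  fun p => a p.2 * Q₁ p + b p.2 * Q₂ p

theorem IsMinEntropyCoupling.mix {P Q₁ Q₂ : α × ζ → ℝ} {c : ℝ}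
    (hQ₁ : IsMinEntropyCoupling P c Q₁) (hQ₂ : IsMinEntropyCoupling P c Q₂) {a b : ζ → ℝ}
    (ha : ∀ z, 0 ≤ a z) (hb : ∀ z, 0 ≤ b z) (hab : ∀ z, a z + b z = 1) :
    IsMinEntropyCoupling P c (fiberMix a b Q₁ Q₂) where
  nonneg p := add_nonneg (mul_nonneg (ha _) (hQ₁.nonneg p)) (mul_nonneg (hb _) (hQ₂.nonneg p))
  marginal_eq z := by
    simp only [fiberMix, sum_add_distrib, ← mul_sum, hQ₁.marginal_eq, hQ₂.marginal_eq, ← add_mul,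
      hab, one_mul]
  le_mul_marginal z hz x := by
    calc a z * Q₁ (x, z) + b z * Q₂ (x, z)
        ≤ a z * (c * ∑ x', P (x', z)) + b z * (c * ∑ x', P (x', z)) := by
          gcongr
          exacts [ha z, hQ₁.le_mul_marginal z hz x, hb z, hQ₂.le_mul_marginal z hz x]
      _ = c * ∑ x', P (x', z) := by rw [← add_mul, hab, one_mul]

theorem condMean_fiberMix (P Q₁ Q₂ : α × ζ → ℝ) (a b : ζ → ℝ) (f : α → ζ → ℝ) (z : ζ) :
    condMean P (fiberMix a b Q₁ Q₂) f z = a z * condMean P Q₁ f z + b z * condMean P Q₂ f z := by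
  simp only [condMean, fiberMix, mul_sum, ← sum_add_distrib]
  exact sum_congr rfl fun x _ => by ring

theorem condMean_one_sub_sub {P Q : α × ζ → ℝ} {z : ζ}
    (h : ∑ x, Q (x, z) = ∑ x, P (x, z)) (f : α → ζ → ℝ) :
    condMean P P (fun x z => 1 - f x z) z - condMean P Q (fun x z => 1 - f x z) z
      = condMean P Q f z - condMean P P f z := by
  simp only [condMean, mul_one_sub, sum_sub_distrib, ← sum_div, h]
  ring

section

variable [Fintype ζ]

def advantage (P Q : α × ζ → ℝ) (f : α → ζ → ℝ) : ℝ :=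
  ∑ z, (∑ x, P (x, z)) * |condMean P P f z - condMean P Q f z|

def posAdvantage (P Q : α × ζ → ℝ) (f : α → ζ → ℝ) : ℝ :=
  ∑ z, (∑ x, P (x, z)) * max (condMean P P f z - condMean P Q f z) 0

def tailMass (P Q : α × ζ → ℝ) (f : α → ζ → ℝ) (δ : ℝ) : ℝ :=
  ∑ w ∈ univ.filter (fun w : α × ζ => δ ≤ f w.1 w.2 - condMean P Q f w.2), P w

theorem IsMinEntropyCoupling.sum_eq {P Q : α × ζ → ℝ} {c : ℝ}
    (hQ : IsMinEntropyCoupling P c Q) : ∑ p, Q p = ∑ p, P p := by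
  simp only [Fintype.sum_prod_type_right, hQ.marginal_eq]

theorem posAdvantage_le_mul_sum_add_tailMass {P Q : α × ζ → ℝ} (hP : ∀ p, 0 ≤ P p)
    (hQ : ∀ p, 0 ≤ Q p) {f : α → ζ → ℝ} (hf : ∀ x z, f x z ∈ Set.Icc (0 : ℝ) 1) {δ : ℝ}
    (hδ : 0 ≤ δ) : posAdvantage P Q f ≤ δ * ∑ p, P p + tailMass P Q f δ := by
  have htail : tailMass P Q f δ
      = ∑ z, ∑ x with δ ≤ f x z - condMean P Q f z, P (x, z) := by
    simp only [tailMass, sum_filter, Fintype.sum_prod_type_right]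
  rw [htail, Fintype.sum_prod_type_right, mul_sum, ← sum_add_distrib]
  refine sum_le_sum fun z _ => ?_
  have hPz : 0 ≤ ∑ x, P (x, z) := sum_nonneg fun x _ => hP _
  have hq : 0 ≤ condMean P Q f z :=
    sum_nonneg fun x _ => mul_nonneg (div_nonneg (hQ _) hPz) (hf x z).1
  rcases le_total (condMean P P f z - condMean P Q f z) 0 with hle | hge
  · rw [max_eq_right hle, mul_zero]
    exact add_nonneg (mul_nonneg hδ hPz) (sum_nonneg fun x _ => hP _)
  · have hfiber : (∑ x, P (x, z)) * (condMean P P f z - condMean P Q f z)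
        = ∑ x, P (x, z) * (f x z - condMean P Q f z) := by
      simp only [mul_sub, condMean, sum_mul_sum_div_mul _ (fun x _ => hP (x, z)), sum_sub_distrib,
        ← sum_mul]
    rw [max_eq_left hge, hfiber]
    exact sum_mul_le_mul_sum_add_sum_filter _ (fun x _ => hP _)
      (fun x _ => by linarith [(hf x z).2]) hδ

theorem exists_advantage_le_posAdvantage_add {P Q₁ Q₂ : α × ζ → ℝ} {c : ℝ} (hP : ∀ p, 0 ≤ P p)
    (hQ₁ : IsMinEntropyCoupling P c Q₁) (hQ₂ : IsMinEntropyCoupling P c Q₂) (f : α → ζ → ℝ) :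
    ∃ Q, IsMinEntropyCoupling P c Q ∧
      advantage P Q f ≤ posAdvantage P Q₁ f + posAdvantage P Q₂ (fun x z => 1 - f x z) := by
  have hmix : ∀ z, ∃ a b : ℝ, 0 ≤ a ∧ 0 ≤ b ∧ a + b = 1 ∧
      |condMean P P f z - (a * condMean P Q₁ f z + b * condMean P Q₂ f z)|
        ≤ max (condMean P P f z - condMean P Q₁ f z) 0
          + max (condMean P Q₂ f z - condMean P P f z) 0 := by
    intro z
    obtain ⟨_, ⟨a, b, ha, hb, hab, rfl⟩, hc⟩ :=
      exists_mem_segment_abs_sub_le (condMean P P f z) (condMean P Q₁ f z) (condMean P Q₂ f z)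
    exact ⟨a, b, ha, hb, hab, hc⟩
  choose a b ha hb hab hclose using hmix
  refine ⟨_, hQ₁.mix hQ₂ ha hb hab, ?_⟩
  simp only [advantage, posAdvantage, condMean_fiberMix, condMean_one_sub_sub (hQ₂.marginal_eq _),
    ← sum_add_distrib, ← mul_add]
  exact sum_le_sum fun z _ => mul_le_mul_of_nonneg_left (hclose z) (sum_nonneg fun x _ => hP _)

theorem exists_le_tailMass {P : α × ζ → ℝ} (hP : ∀ p, 0 ≤ P p) (hP1 : ∑ p, P p = 1)
    {D : α → ζ → ℝ} (hD : ∀ x z, D x z ∈ Set.Icc (0 : ℝ) 1) {c ε : ℝ} (hε : 0 ≤ ε)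
    (h : ∀ Q, IsMinEntropyCoupling P c Q → ε ≤ advantage P Q D) :
    ∃ D' : α → ζ → ℝ, (D' = D ∨ D' = fun x z => 1 - D x z) ∧
      ∀ Q, IsMinEntropyCoupling P c Q → ε / 4 ≤ tailMass P Q D' (ε / 4) := by
  by_contra! hcon
  obtain ⟨Q₁, hQ₁, htail₁⟩ := hcon D (Or.inl rfl)
  obtain ⟨Q₂, hQ₂, htail₂⟩ := hcon _ (Or.inr rfl)
  obtain ⟨Q, hQ, hadv⟩ := exists_advantage_le_posAdvantage_add hP hQ₁ hQ₂ D
  have hpos₁ := posAdvantage_le_mul_sum_add_tailMass hP hQ₁.nonneg hD (δ := ε / 4) (by positivity)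
  have hpos₂ := posAdvantage_le_mul_sum_add_tailMass hP hQ₂.nonneg (f := fun x z => 1 - D x z)
    (fun x z => ⟨by linarith [(hD x z).2], by linarith [(hD x z).1]⟩) (δ := ε / 4) (by positivity)
  rw [hP1, mul_one] at hpos₁ hpos₂
  linarith [h Q hQ]

end

end

theorem stmt18_general {α ζ : Type*} [Fintype α] [Fintype ζ]
    (P : α × ζ → ℝ) (hP0 : ∀ p, 0 ≤ P p) (hP1 : ∑ p, P p = 1)
    (D : α → ζ → ℝ) (hD : ∀ x z, D x z = 0 ∨ D x z = 1)
    (ε : ℝ) (hε : 0 < ε) (k : ℕ)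
    (h : ∀ Q : α × ζ → ℝ, (∀ p, 0 ≤ Q p) → (∑ p, Q p = 1) →
      (∀ z, ∑ x, Q (x, z) = ∑ x, P (x, z)) →
      (∀ z, 0 < ∑ x, P (x, z) → ∀ x,
        Q (x, z) ≤ ((2:ℝ) ^ k)⁻¹ * ∑ x', P (x', z)) →
      ε ≤ ∑ z, (∑ x, P (x, z)) *
        |(∑ x, (P (x, z) / ∑ x', P (x', z)) * D x z) -
         (∑ x, (Q (x, z) / ∑ x', P (x', z)) * D x z)|) :
    ∃ D' : α → ζ → ℝ, (D' = D ∨ D' = fun x z => 1 - D x z) ∧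
      ∀ Q : α × ζ → ℝ, (∀ p, 0 ≤ Q p) → (∑ p, Q p = 1) →
        (∀ z, ∑ x, Q (x, z) = ∑ x, P (x, z)) →
        (∀ z, 0 < ∑ x, P (x, z) → ∀ x,
          Q (x, z) ≤ ((2:ℝ) ^ k)⁻¹ * ∑ x', P (x', z)) →
        ε ^ 2 / 16 ≤ ∑ w ∈ Finset.univ.filter (fun w : α × ζ =>
          ε / 4 ≤ D' w.1 w.2 -
            ∑ x', (Q (x', w.2) / ∑ x'', P (x'', w.2)) * D' x' w.2), P w := by
  have hD01 : ∀ x z, D x z ∈ Set.Icc (0 : ℝ) 1 := fun x z => by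
    rcases hD x z with hx | hx <;> simp [hx]
  obtain ⟨D', hD', htail⟩ := exists_le_tailMass hP0 hP1 hD01 hε.le fun Q hQ =>
    h Q hQ.nonneg (hQ.sum_eq.trans hP1) hQ.marginal_eq hQ.le_mul_marginal
  refine ⟨D', hD', fun Q hQ0 _ hQm hQc => ?_⟩
  have hlow : ε / 4 ≤ tailMass P Q D' (ε / 4) := htail Q ⟨hQ0, hQm, hQc⟩
  have hup : tailMass P Q D' (ε / 4) ≤ 1 :=
    hP1 ▸ sum_le_sum_of_subset_of_nonneg (filter_subset _ _) fun p _ _ => hP0 p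
  change ε ^ 2 / 16 ≤ tailMass P Q D' (ε / 4)
  nlinarith

/-- Main technical lemma (statistical version): if `D` has modulus advantage at least
`ε` against every `(Y,Z)` with per-`z` min-entropy `k`, then for `D' = D` or `D' = 1−D`,
`P_{(x,z)←(X,Z)}[D'(x,z) − E_{Y|Z=z}D' ≥ ε/4] ≥ ε²/16` for every such `(Y,Z)`. -/
theorem stmt18 {α ζ : Type*} [Fintype α] [Fintype ζ]
    (P : α × ζ → ℝ) (hP0 : ∀ p, 0 ≤ P p) (hP1 : ∑ p, P p = 1)
    (D : α → ζ → ℝ) (hD : ∀ x z, D x z = 0 ∨ D x z = 1)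
    (ε : ℝ) (hε : 0 < ε) (k : ℕ) (hk : 2 ^ k ≤ Fintype.card α)
    (h : ∀ Q : α × ζ → ℝ, (∀ p, 0 ≤ Q p) → (∑ p, Q p = 1) →
      (∀ z, ∑ x, Q (x, z) = ∑ x, P (x, z)) →
      (∀ z, 0 < ∑ x, P (x, z) → ∀ x,
        Q (x, z) ≤ ((2:ℝ) ^ k)⁻¹ * ∑ x', P (x', z)) →
      ε ≤ ∑ z, (∑ x, P (x, z)) *
        |(∑ x, (P (x, z) / ∑ x', P (x', z)) * D x z) -
         (∑ x, (Q (x, z) / ∑ x', P (x', z)) * D x z)|) :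
    ∃ D' : α → ζ → ℝ, (D' = D ∨ D' = fun x z => 1 - D x z) ∧
      ∀ Q : α × ζ → ℝ, (∀ p, 0 ≤ Q p) → (∑ p, Q p = 1) →
        (∀ z, ∑ x, Q (x, z) = ∑ x, P (x, z)) →
        (∀ z, 0 < ∑ x, P (x, z) → ∀ x,
          Q (x, z) ≤ ((2:ℝ) ^ k)⁻¹ * ∑ x', P (x', z)) →
        ε ^ 2 / 16 ≤ ∑ w ∈ Finset.univ.filter (fun w : α × ζ =>
          ε / 4 ≤ D' w.1 w.2 -
            ∑ x', (Q (x', w.2) / ∑ x'', P (x'', w.2)) * D' x' w.2), P w :=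
  stmt18_general P hP0 hP1 D hD ε hε k h
end
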